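/- arXiv:2303.07712 — 11 statements merged into one kernel-verified Lean document; each statement's English description precedes it below -/
import Mathlib

section
/- The dilatation A[{M_i/a_i}_{i∈I}] is the zero ring if and only if a^ν = 0 in A for some ν ∈ ⊕_{i∈I} ℕ. -/
open scoped TensorProduct

noncomputable section

variable {A : Type*} [CommRing A] {I : Type*}

/-- The multiplicative submonoid generated by the elements `a_i` of the multi-center. -/
def dilSubmonoid (a : I → A) : Submonoid A := Submonoid.closure (Set.range a)

lemma a_mem_dilSubmonoid (a : I → A) (i : I) : a i ∈ dilSubmonoid a :=
  Submonoid.subset_closure ⟨i, rfl⟩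

/-- `a^ν` for `ν ∈ ⊕_{i∈I} ℕ`. -/
def apow (a : I → A) (ν : I →₀ ℕ) : A := ν.prod fun i n => a i ^ n

lemma apow_mem (a : I → A) (ν : I →₀ ℕ) : apow a ν ∈ dilSubmonoid a :=
  Submonoid.prod_mem _ fun i _ => pow_mem (a_mem_dilSubmonoid a i) _

/-- The product ideal `L^ν = ∏_i (M_i + (a_i))^{ν_i}`. -/
def Lpow (M : I → Ideal A) (a : I → A) (ν : I →₀ ℕ) : Ideal A :=
  ν.prod fun i n => (M i + Ideal.span {a i}) ^ n

/-- The fraction `m / a_i` in the localization at the submonoid generated by the `a_i`. -/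
def dilFrac (a : I → A) (i : I) (m : A) : Localization (dilSubmonoid a) :=
  Localization.mk m ⟨a i, a_mem_dilSubmonoid a i⟩

/-- The multi-centered dilatation `A[{M_i/a_i}]`, realized as the sub-`A`-algebra of the
localization `S⁻¹A` generated by the fractions `m / a_i` with `m ∈ M_i`. -/
def dilatation (M : I → Ideal A) (a : I → A) :
    Subalgebra A (Localization (dilSubmonoid a)) :=
  Algebra.adjoin A (⋃ i, dilFrac a i '' (M i))

theorem SubsemiringClass.subsingleton_iff {R σ : Type*} [Semiring R] [SetLike σ R]
    [SubsemiringClass σ R] (S : σ) : Subsingleton S ↔ Subsingleton R := by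
  rw [← subsingleton_iff_zero_eq_one, ← subsingleton_iff_zero_eq_one, Subtype.ext_iff]
  rfl

lemma mem_dilSubmonoid_iff (a : I → A) (x : A) :
    x ∈ dilSubmonoid a ↔ ∃ ν : I →₀ ℕ, apow a ν = x := by
  simp only [dilSubmonoid, Submonoid.mem_closure_range_iff, apow, eq_comm]

/-- the dilatation is the zero ring iff `a^ν = 0` for some `ν ∈ ⊕_I ℕ`. -/
theorem stmt1 (M : I → Ideal A) (a : I → A) :
    Subsingleton ↥(dilatation M a) ↔ ∃ ν : I →₀ ℕ, apow a ν = 0 := by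
  rw [SubsemiringClass.subsingleton_iff, IsLocalization.subsingleton_iff (M := dilSubmonoid a),
    mem_dilSubmonoid_iff]
end
end

section
/- If A is an integral domain and a_i ≠ 0 for all i ∈ I, then the dilatation A[{M_i/a_i}_{i∈I}] is an integral domain. -/
open scoped TensorProduct

noncomputable section

variable {A : Type*} [CommRing A] {I : Type*}

lemma dilSubmonoid_le_nonZeroDivisors [IsDomain A] {a : I → A} (ha : ∀ i, a i ≠ 0) :
    dilSubmonoid a ≤ nonZeroDivisors A :=
  Submonoid.closure_le.mpr <| Set.range_subset_iff.mpr fun i => mem_nonZeroDivisors_of_ne_zero (ha i)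

/-- if `A` is a domain and all `a_i ≠ 0`, the dilatation is a domain. -/
theorem stmt2 [IsDomain A] (M : I → Ideal A) (a : I → A) (ha : ∀ i, a i ≠ 0) :
    IsDomain ↥(dilatation M a) :=
  have := IsLocalization.isDomain_localization (dilSubmonoid_le_nonZeroDivisors ha)
  inferInstance
end
end

section
/- If A is a reduced ring, then the dilatation A[{M_i/a_i}_{i∈I}] is reduced. -/
noncomputable section

variable {A : Type*} [CommRing A] {I : Type*}

/-- if `A` is reduced then the dilatation is reduced. -/
theorem stmt3 [IsReduced A] (M : I → Ideal A) (a : I → A) :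
    IsReduced ↥(dilatation M a) :=
  isReduced_of_injective (dilatation M a).val Subtype.val_injective
end
end

section
/- For every ν ∈ ⊕_{i∈I} ℕ, the image of a^ν under the canonical map A → A[{M_i/a_i}_{i∈I}] is a non-zero-divisor. -/
open scoped TensorProduct

noncomputable section

variable {A : Type*} [CommRing A] {I : Type*}

theorem Subalgebra.algebraMap_mem_nonZeroDivisors {R S : Type*} [CommSemiring R] [Semiring S]
    [Algebra R S] (B : Subalgebra R S) {r : R} (hr : algebraMap R S r ∈ nonZeroDivisors S) :
    algebraMap R B r ∈ nonZeroDivisors B :=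
  comap_nonZeroDivisors_le_of_injective (f := B.val) Subtype.val_injective hr

/-- for every `ν`, the image of `a^ν` in the dilatation is a non-zero-divisor. -/
theorem stmt4 (M : I → Ideal A) (a : I → A) (ν : I →₀ ℕ) :
    algebraMap A ↥(dilatation M a) (apow a ν) ∈ nonZeroDivisors ↥(dilatation M a) :=
  (dilatation M a).algebraMap_mem_nonZeroDivisors
    (IsLocalization.map_units _ ⟨apow a ν, apow_mem a ν⟩).mem_nonZeroDivisors
end
end

section
/- If M_i = A for all i ∈ I, then the dilatation A[{M_i/a_i}_{i∈I}] is canonically isomorphic as an A-algebra to the localization S⁻¹A, where S is the multiplicative subset of A generated by {a_i}_{i∈I}. -/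
open scoped TensorProduct

noncomputable section

variable {A : Type*} [CommRing A] {I : Type*}

/-! Since `1 ∈ M i`, each `1 / a_i` lies in the dilatation, so every element of `S` becomes a unit
in it. A subalgebra of `S⁻¹A` in which `S` is invertible receives an `A`-algebra map from `S⁻¹A`
splitting the inclusion, and by uniqueness in the universal property the composite is the
identity; hence the dilatation is all of `S⁻¹A`. -/

theorem IsLocalization.subalgebra_eq_top_of_isUnit {R S : Type*} [CommRing R] [CommRing S]
    [Algebra R S] (M : Submonoid R) [IsLocalization M S] (T : Subalgebra R S)
    (hT : ∀ m : M, IsUnit (algebraMap R T m)) : T = ⊤ := by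
  let retraction : S →ₐ[R] T := IsLocalization.liftAlgHom (M := M) (f := Algebra.ofId R T) hT
  have hid : T.val.comp retraction = AlgHom.id R S :=
    (IsLocalization.algHom_subsingleton M).elim _ _
  rw [eq_top_iff]
  intro x _
  rw [← AlgHom.id_apply (R := R) x, ← hid]
  exact (retraction x).2

theorem isUnit_algebraMap_dilatation (M : I → Ideal A) (a : I → A) (i : I) (hi : 1 ∈ M i) :
    IsUnit (algebraMap A (dilatation M a) (a i)) := by
  have hfrac : dilFrac a i 1 ∈ dilatation M a :=
    Algebra.subset_adjoin (Set.mem_iUnion.2 ⟨i, 1, hi, rfl⟩)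
  refine IsUnit.of_mul_eq_one (b := ⟨_, hfrac⟩) (Subtype.ext ?_)
  simp only [dilFrac, Subalgebra.coe_mul, Subalgebra.coe_algebraMap, Subalgebra.coe_one,
    Localization.mk_eq_mk', IsLocalization.mul_mk'_eq_mk'_of_mul, mul_one,
    IsLocalization.mk'_self]

theorem dilatation_eq_top (M : I → Ideal A) (a : I → A) (hM : ∀ i, 1 ∈ M i) :
    dilatation M a = ⊤ := by
  have hunits : dilSubmonoid a ≤
      (IsUnit.submonoid (dilatation M a)).comap (algebraMap A (dilatation M a)) :=
    Submonoid.closure_le.2 <| Set.range_subset_iff.2 fun i =>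
      isUnit_algebraMap_dilatation M a i (hM i)
  exact IsLocalization.subalgebra_eq_top_of_isUnit (dilSubmonoid a) _ fun s => hunits s.2

/-- if `M_i = A` for all `i`, the dilatation is canonically isomorphic as an
`A`-algebra to the localization `S⁻¹A`, `S` the multiplicative subset generated by the `a_i`. -/
theorem stmt5 (M : I → Ideal A) (a : I → A) (hM : ∀ i, M i = ⊤) :
    Nonempty (↥(dilatation M a) ≃ₐ[A] Localization (dilSubmonoid a)) := by
  have htop : dilatation M a = ⊤ :=
    dilatation_eq_top M a fun i => (hM i).symm ▸ Submodule.mem_top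
  exact ⟨(Subalgebra.equivOfEq _ _ htop).trans Subalgebra.topEquiv⟩
end
end

section
/- A morphism of commutative rings f : A → B is isomorphic as an A-algebra to a multi-centered dilatation of A if and only if there exists a multiplicative subset S ⊆ A and a sub-A-algebra C of S⁻¹A with B ≅ C as A-algebras. -/
open scoped TensorProduct

noncomputable section

variable {A : Type*} [CommRing A] {I : Type*}

lemma dilSubmonoid_eq {S : Submonoid A} {a : I → A} (h : Set.range a = S) :
    dilSubmonoid a = S := by
  rw [dilSubmonoid, h, Submonoid.closure_eq]

lemma dilatation_span_singleton (m a : I → A) :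
    dilatation (fun i => Ideal.span {m i}) a =
      Algebra.adjoin A (Set.range fun i => dilFrac a i (m i)) := by
  apply le_antisymm
  · rw [dilatation, Algebra.adjoin_le_iff]
    rintro _ ⟨_, ⟨i, rfl⟩, x, hx, rfl⟩
    obtain ⟨r, rfl⟩ := Ideal.mem_span_singleton'.1 hx
    have hfrac : dilFrac a i (r * m i) = r • dilFrac a i (m i) := by
      rw [dilFrac, dilFrac, Localization.smul_mk, smul_eq_mul]
    rw [hfrac]
    exact Subalgebra.smul_mem _ (Algebra.subset_adjoin (Set.mem_range_self i)) r
  · rw [Algebra.adjoin_le_iff]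
    rintro _ ⟨i, rfl⟩
    exact Algebra.subset_adjoin
      (Set.mem_iUnion.2 ⟨i, m i, Ideal.mem_span_singleton_self (m i), rfl⟩)

def Localization.algEquivOfEq {S T : Submonoid A} (h : S = T) :
    Localization S ≃ₐ[A] Localization T := by
  subst h
  exact AlgEquiv.refl

lemma Localization.algEquivOfEq_mk {S T : Submonoid A} (h : S = T) (x : A) (s : S) :
    Localization.algEquivOfEq h (Localization.mk x s) =
      Localization.mk x (⟨s, h ▸ s.2⟩ : T) := by
  subst h
  rfl

/-- The centers are indexed by the fractions `x / s` lying in `C`, with `M = (x)` and `a = s`;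
the `a`'s then generate `S` because `s / s = 1 ∈ C`. -/
theorem Subalgebra.exists_algEquiv_dilatation {A : Type u} [CommRing A] {S : Submonoid A}
    (C : Subalgebra A (Localization S)) :
    ∃ (I : Type u) (M : I → Ideal A) (a : I → A), Nonempty (C ≃ₐ[A] dilatation M a) := by
  let I := {p : A × S // Localization.mk p.1 p.2 ∈ C}
  let a : I → A := fun p => p.1.2
  have hrange : Set.range a = S := by
    refine Set.Subset.antisymm (Set.range_subset_iff.2 fun p => p.1.2.2) fun s hs => ?_
    have hone : Localization.mk s ⟨s, hs⟩ ∈ C := by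
      rw [Localization.mk_self ⟨s, hs⟩]
      exact C.one_mem
    exact ⟨⟨(s, ⟨s, hs⟩), hone⟩, rfl⟩
  let f := Localization.algEquivOfEq (dilSubmonoid_eq hrange)
  have hmap : (dilatation (fun p : I => Ideal.span {p.1.1}) a).map f.toAlgHom = C := by
    rw [dilatation_span_singleton, AlgHom.map_adjoin, ← Set.range_comp]
    have hfrac : f.toAlgHom ∘ (fun p : I => dilFrac a p p.1.1) =
        fun p : I => Localization.mk p.1.1 p.1.2 := by
      funext p
      exact Localization.algEquivOfEq_mk _ _ _
    rw [hfrac]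
    convert Algebra.adjoin_eq C
    refine Set.Subset.antisymm (Set.range_subset_iff.2 fun p => p.2) fun x hx => ?_
    induction x using Localization.induction_on with
    | H p => exact ⟨⟨p, hx⟩, rfl⟩
  exact ⟨I, _, a, ⟨(Subalgebra.equivOfEq _ _ hmap.symm).trans (f.subalgebraMap _).symm⟩⟩

/-- an `A`-algebra `B` is isomorphic to a multi-centered dilatation of `A` iff
it is isomorphic to a sub-`A`-algebra of a localization `S⁻¹A`. -/
theorem stmt7 {A : Type u} [CommRing A] {B : Type v} [CommRing B] [Algebra A B] :
    (∃ (I : Type u) (M : I → Ideal A) (a : I → A),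
        Nonempty (B ≃ₐ[A] ↥(dilatation M a))) ↔
    (∃ (S : Submonoid A) (C : Subalgebra A (Localization S)),
        Nonempty (B ≃ₐ[A] ↥C)) := by
  constructor
  · rintro ⟨I, M, a, ⟨e⟩⟩
    exact ⟨dilSubmonoid a, dilatation M a, ⟨e⟩⟩
  · rintro ⟨S, C, ⟨e⟩⟩
    obtain ⟨I, M, a, ⟨e'⟩⟩ := C.exists_algEquiv_dilatation
    exact ⟨I, M, a, ⟨e.trans e'⟩⟩
end
end

section
/- Let K ⊆ I and J = I \ K, and let φ : A[{M_i/a_i}_{i∈K}] → A[{M_i/a_i}_{i∈I}] be the canonical A-algebra morphism. If M_j ⊆ (a_j) for all j ∈ J then φ is surjective; if a_j is a non-zero-divisor in A for all j ∈ J then φ is injective. -/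
/-! Both dilatations live in `S⁻¹A`, and `φ` is the restriction of the localization map, so its
image is the subalgebra generated by the fractions `m / a_k` with `k ∈ K`. If `M_j ⊆ (a_j)`, each
remaining generator `c a_j / a_j` equals `c ∈ A`, which gives surjectivity. For injectivity, a
product of `a_i` killing `m` can be stripped of its non-zero-divisor factors `a_j`, `j ∉ K`. -/

open scoped TensorProduct

noncomputable section

variable {A : Type*} [CommRing A] {I : Type*}

set_option synthInstance.maxHeartbeats 1000000
set_option maxHeartbeats 1000000


/-- The canonical map between localizations induced by enlarging the set of centers. -/
def locMapK (a : I → A) (K : Set I) :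
    Localization (dilSubmonoid fun k : K => a k) →+* Localization (dilSubmonoid a) :=
  IsLocalization.map (M := dilSubmonoid fun k : K => a k) (T := dilSubmonoid a)
    (Localization (dilSubmonoid a)) (RingHom.id A)
    (Submonoid.closure_le.mpr (by
      rintro x ⟨k, rfl⟩
      exact a_mem_dilSubmonoid a k))

lemma dilSubmonoid_restrict_le (a : I → A) (K : Set I) :
    dilSubmonoid (fun k : K => a k) ≤ dilSubmonoid a :=
  Submonoid.closure_le.mpr (by rintro x ⟨k, rfl⟩; exact a_mem_dilSubmonoid a k)

lemma locMapK_mk (a : I → A) (K : Set I) (m : A) (s : dilSubmonoid fun k : K => a k) :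
    locMapK a K (Localization.mk m s) =
      Localization.mk m ⟨s, dilSubmonoid_restrict_le a K s.2⟩ := by
  simp only [Localization.mk_eq_mk']
  exact IsLocalization.map_mk' _ m s

lemma locMapK_dilFrac (a : I → A) (K : Set I) (k : K) (m : A) :
    locMapK a K (dilFrac (fun k : K => a k) k m) = dilFrac a k m :=
  locMapK_mk a K m _

def locMapKAlgHom (a : I → A) (K : Set I) :
    Localization (dilSubmonoid fun k : K => a k) →ₐ[A] Localization (dilSubmonoid a) :=
  { locMapK a K with
    commutes' := fun c =>
      IsLocalization.map_eq (S := Localization (dilSubmonoid fun k : K => a k)) _ c }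

lemma dilatation_map_locMapKAlgHom (M : I → Ideal A) (a : I → A) (K : Set I) :
    (dilatation (fun k : K => M k) (fun k : K => a k)).map (locMapKAlgHom a K) =
      Algebra.adjoin A (⋃ k : K, dilFrac a k '' (M k)) := by
  rw [dilatation, AlgHom.map_adjoin, Set.image_iUnion]
  simp only [Set.image_image]
  exact congrArg _ (Set.iUnion_congr fun k => Set.image_congr fun m _ => locMapK_dilFrac a K k m)

lemma dilatation_map_locMapKAlgHom_le (M : I → Ideal A) (a : I → A) (K : Set I) :
    (dilatation (fun k : K => M k) (fun k : K => a k)).map (locMapKAlgHom a K) ≤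
      dilatation M a := by
  rw [dilatation_map_locMapKAlgHom]
  exact Algebra.adjoin_mono (Set.iUnion_subset fun k => Set.subset_iUnion_of_subset (k : I) le_rfl)

lemma dilFrac_mul_self (a : I → A) (i : I) (c : A) :
    dilFrac a i (c * a i) = algebraMap A _ c := by
  rw [dilFrac, Localization.mk_eq_mk']
  exact IsLocalization.mk'_mul_cancel_right c (⟨a i, a_mem_dilSubmonoid a i⟩ : dilSubmonoid a)

lemma dilatation_le_map_locMapKAlgHom (M : I → Ideal A) (a : I → A) (K : Set I)
    (h : ∀ j ∉ K, M j ≤ Ideal.span {a j}) :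
    dilatation M a ≤
      (dilatation (fun k : K => M k) (fun k : K => a k)).map (locMapKAlgHom a K) := by
  rw [dilatation_map_locMapKAlgHom]
  refine Algebra.adjoin_le (Set.iUnion_subset fun i => ?_)
  rintro _ ⟨m, hm, rfl⟩
  by_cases hi : i ∈ K
  · exact Algebra.subset_adjoin (Set.mem_iUnion.mpr ⟨⟨i, hi⟩, m, hm, rfl⟩)
  · obtain ⟨c, rfl⟩ := Ideal.mem_span_singleton'.mp (h i hi hm)
    rw [dilFrac_mul_self]
    exact Subalgebra.algebraMap_mem _ c

lemma exists_mem_mul_eq_zero_of_mem_closure {M₀ : Type*} [CommMonoidWithZero M₀]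
    {s : Set M₀} {T : Submonoid M₀} (hs : ∀ x ∈ s, x ∈ T ∨ x ∈ nonZeroDivisors M₀)
    {t : M₀} (ht : t ∈ Submonoid.closure s) :
    ∀ m : M₀, t * m = 0 → ∃ u ∈ T, u * m = 0 := by
  induction ht using Submonoid.closure_induction with
  | mem x hx =>
    intro m hm
    rcases hs x hx with hxT | hx0
    · exact ⟨x, hxT, hm⟩
    · refine ⟨1, T.one_mem, ?_⟩
      rw [one_mul, mem_nonZeroDivisors_iff_right.mp hx0 m (by rwa [mul_comm])]
  | one => exact fun m hm => ⟨1, T.one_mem, hm⟩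
  | mul x y _ _ ihx ihy =>
    intro m hm
    obtain ⟨u, hu, hum⟩ := ihx (y * m) (by rwa [← mul_assoc])
    obtain ⟨v, hv, hvm⟩ := ihy (u * m) (by rwa [mul_left_comm])
    exact ⟨v * u, mul_mem hv hu, by rwa [mul_assoc]⟩

lemma locMapK_injective (a : I → A) (K : Set I) (h : ∀ j ∉ K, a j ∈ nonZeroDivisors A) :
    Function.Injective (locMapK a K) := by
  refine (injective_iff_map_eq_zero _).mpr fun x => Localization.induction_on x ?_
  rintro ⟨m, s⟩ hx
  rw [locMapK_mk, Localization.mk_eq_mk', IsLocalization.mk'_eq_zero_iff] at hx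
  obtain ⟨⟨t, ht⟩, htm⟩ := hx
  have hgen : ∀ x ∈ Set.range a,
      x ∈ dilSubmonoid (fun k : K => a k) ∨ x ∈ nonZeroDivisors A := by
    rintro _ ⟨i, rfl⟩
    by_cases hi : i ∈ K
    · exact .inl (a_mem_dilSubmonoid (fun k : K => a k) ⟨i, hi⟩)
    · exact .inr (h i hi)
  obtain ⟨u, hu, hum⟩ := exists_mem_mul_eq_zero_of_mem_closure hgen ht m htm
  rw [Localization.mk_eq_mk', IsLocalization.mk'_eq_zero_iff]
  exact ⟨⟨u, hu⟩, hum⟩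

/-- for `K ⊆ I`, the canonical `A`-algebra morphism
`φ : A[{M_i/a_i}_{i∈K}] → A[{M_i/a_i}_{i∈I}]` exists; it is surjective if `M_j ⊆ (a_j)` for
all `j ∈ I \ K`, and injective if each `a_j`, `j ∈ I \ K`, is a non-zero-divisor in `A`. -/
theorem stmt9 (M : I → Ideal A) (a : I → A) (K : Set I) :
    ∃ φ : ↥(dilatation (fun k : K => M k) (fun k : K => a k)) →ₐ[A] ↥(dilatation M a),
      (∀ x, ((φ x : Localization (dilSubmonoid a)))
          = locMapK a K ((x : Localization (dilSubmonoid fun k : K => a k)))) ∧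
      ((∀ j ∉ K, M j ≤ Ideal.span {a j}) → Function.Surjective φ) ∧
      ((∀ j ∉ K, a j ∈ nonZeroDivisors A) → Function.Injective φ) := by
  set D := dilatation (fun k : K => M k) (fun k : K => a k)
  have hmaps (x : D) : locMapKAlgHom a K x ∈ dilatation M a :=
    dilatation_map_locMapKAlgHom_le M a K ⟨x, x.2, rfl⟩
  refine ⟨((locMapKAlgHom a K).comp D.val).codRestrict _ hmaps, fun _ => rfl, ?_, ?_⟩
  · intro h y
    obtain ⟨x, hx, hxy⟩ := dilatation_le_map_locMapKAlgHom M a K h y.2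
    exact ⟨⟨x, hx⟩, Subtype.ext hxy⟩
  · intro h x y hxy
    exact Subtype.ext (locMapK_injective a K h (congrArg Subtype.val hxy))
end
end

section
/- For every ν ∈ ⊕_{i∈I} ℕ, the extended ideal L^ν · A[{M_i/a_i}_{i∈I}] equals the principal ideal a^ν · A[{M_i/a_i}_{i∈I}]. -/
/-
Each `m ∈ M_i` becomes `(m / a_i) · a_i` in the dilatation, so `M_i` extends into the principal
ideal `(a_i)` and hence `L_i = M_i + (a_i)` extends to exactly `(a_i)`. Extension of ideals is
multiplicative, and products of principal ideals are principal, so `L^ν` extends to `(a^ν)`.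
-/

open scoped TensorProduct

noncomputable section

variable {A : Type*} [CommRing A] {I : Type*}

namespace Ideal

variable {R S : Type*} [CommSemiring R] [CommSemiring S] (f : R →+* S)

theorem map_sup_span_singleton_of_map_le {J : Ideal R} {x : R} (hJ : J.map f ≤ span {f x}) :
    (J ⊔ span {x}).map f = span {f x} := by
  rw [map_sup, map_span, Set.image_singleton, sup_eq_right.2 hJ]

theorem map_finsuppProd_pow_of_map_eq_span_singleton {ι : Type*} {J : ι → Ideal R} {x : ι → R}
    (hJ : ∀ i, (J i).map f = span {f (x i)}) (ν : ι →₀ ℕ) :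
    (ν.prod fun i n => J i ^ n).map f = span {f (ν.prod fun i n => x i ^ n)} := by
  rw [map_finsuppProd, Finsupp.prod, Finsupp.prod, ← prod_span_singleton]
  refine (map_prod (mapHom f) _ _).trans (Finset.prod_congr rfl fun i _ => ?_)
  rw [mapHom_apply, Ideal.map_pow, hJ, map_pow, span_singleton_pow]

end Ideal

open Ideal

section

variable {M : I → Ideal A} {a : I → A}

theorem dilFrac_mem_dilatation {i : I} {m : A} (hm : m ∈ M i) :
    dilFrac a i m ∈ dilatation M a :=
  Algebra.subset_adjoin (Set.mem_iUnion.2 ⟨i, m, hm, rfl⟩)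

theorem map_le_span_algebraMap_dilatation (i : I) :
    (M i).map (algebraMap A (dilatation M a)) ≤ span {algebraMap A (dilatation M a) (a i)} := by
  refine map_le_iff_le_comap.2 fun m hm => mem_span_singleton'.2
    ⟨⟨dilFrac a i m, dilFrac_mem_dilatation hm⟩, Subtype.ext ?_⟩
  change dilFrac a i m * algebraMap A _ (a i) = algebraMap A _ m
  rw [dilFrac, Localization.mk_eq_mk']
  exact IsLocalization.mk'_spec _ m ⟨a i, a_mem_dilSubmonoid a i⟩

end

/-- for every `ν`, the extended ideal `L^ν · A[{M_i/a_i}]` equals the principal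
ideal generated by the image of `a^ν`. -/
theorem stmt10 (M : I → Ideal A) (a : I → A) (ν : I →₀ ℕ) :
    Ideal.map (algebraMap A ↥(dilatation M a)) (Lpow M a ν)
      = Ideal.span {algebraMap A ↥(dilatation M a) (apow a ν)} :=
  map_finsuppProd_pow_of_map_eq_span_singleton _
    (fun i => map_sup_span_singleton_of_map_le _ (map_le_span_algebraMap_dilatation i)) ν
end
end

section
/- Universal property of dilatations: if χ : A → B is a ring morphism such that for each i ∈ I, χ(a_i) is a non-zero-divisor in B and χ(a_i)·B = χ(L_i)·B (where L_i = M_i + (a_i)), then there exists a unique A-algebra morphism A[{M_i/a_i}_{i∈I}] → B; it sends the class of l/a^ν to the unique b ∈ B with χ(a^ν)·b = χ(l). -/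
/-!
Write `χ = algebraMap A B` and `S` for the monoid generated by the `a_i`. In any subalgebra of
`S⁻¹A` containing `x = l/s` one has `s • x = l`, so an `A`-algebra map `φ` to `B` satisfies
`χ(s) φ(x) = χ(l)`; once `χ(S)` consists of non-zero-divisors this determines `φ`. Those
non-zero-divisors also make `B` a subring of `χ(S)⁻¹B`, and the induced map
`S⁻¹A → χ(S)⁻¹B` sends each generator `m/a_i` of the dilatation into `B`, since
`χ(m) ∈ χ(L_i)B = χ(a_i)B`; hence it restricts to the required map on the dilatation.
-/

open scoped TensorProduct

noncomputable section

variable {A : Type*} [CommRing A] {I : Type*}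

section LocalizationSubalgebra

variable {A B : Type*} [CommRing A] [CommRing B] [Algebra A B] {S : Submonoid A}

theorem algebraMap_mul_algHom_eq_of_eq_mk {R : Subalgebra A (Localization S)} (φ : R →ₐ[A] B)
    {x : R} {l : A} {s : S} (hx : (x : Localization S) = Localization.mk l s) :
    algebraMap A B s * φ x = algebraMap A B l := by
  have hmul : algebraMap A R s * x = algebraMap A R l :=
    Subtype.ext (by simp [hx, Localization.mk_eq_mk'])
  simpa using congrArg φ hmul

theorem algHom_ext_of_le_nonZeroDivisors (hS : S ≤ (nonZeroDivisors B).comap (algebraMap A B))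
    {R : Subalgebra A (Localization S)} (φ ψ : R →ₐ[A] B) : φ = ψ := by
  ext x
  obtain ⟨⟨l, s⟩, hx⟩ := IsLocalization.mk'_surjective S (x : Localization S)
  rw [← Localization.mk_eq_mk'] at hx
  exact (mul_cancel_left_mem_nonZeroDivisors (hS s.2)).mp
    ((algebraMap_mul_algHom_eq_of_eq_mk φ hx.symm).trans
      (algebraMap_mul_algHom_eq_of_eq_mk ψ hx.symm).symm)

theorem nonempty_algHom_adjoin_of_dvd (hS : S ≤ (nonZeroDivisors B).comap (algebraMap A B))
    (X : Set (Localization S))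
    (hX : ∀ x ∈ X, ∃ (l : A) (s : S) (b : B),
      x = Localization.mk l s ∧ algebraMap A B s * b = algebraMap A B l) :
    Nonempty (Algebra.adjoin A X →ₐ[A] B) := by
  let T := Localization (Algebra.algebraMapSubmonoid B S)
  have hST : S ≤ (Algebra.algebraMapSubmonoid B S).comap (algebraMap A B) :=
    Submonoid.le_comap_map S
  let f : Localization S →ₐ[A] T :=
    { IsLocalization.map T (algebraMap A B) hST with commutes' := IsLocalization.map_eq hST }
  have hinj : Function.Injective (algebraMap B T) :=
    IsLocalization.injective (M := Algebra.algebraMapSubmonoid B S) T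
      (Submonoid.map_le_iff_le_comap.2 hS)
  have hle : Algebra.adjoin A X ≤ (IsScalarTower.toAlgHom A B T).range.comap f := by
    refine Algebra.adjoin_le fun x hx => ?_
    obtain ⟨l, s, b, rfl, hb⟩ := hX x hx
    refine ⟨b, ?_⟩
    show algebraMap B T b = IsLocalization.map T (algebraMap A B) hST (Localization.mk l s)
    rw [Localization.mk_eq_mk', IsLocalization.map_mk', IsLocalization.eq_mk'_iff_mul_eq,
      ← map_mul, mul_comm, hb]
  exact ⟨(AlgEquiv.ofInjective _ hinj).symm.toAlgHom.comp
    ((f.comp (Algebra.adjoin A X).val).codRestrict _ fun x => hle x.2)⟩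

end LocalizationSubalgebra

theorem dilSubmonoid_le_comap_nonZeroDivisors {B : Type*} [CommRing B] [Algebra A B] {a : I → A}
    (h : ∀ i, algebraMap A B (a i) ∈ nonZeroDivisors B) :
    dilSubmonoid a ≤ (nonZeroDivisors B).comap (algebraMap A B) :=
  Submonoid.closure_le.2 (Set.range_subset_iff.2 h)

/-- universal property: if `χ = algebraMap A B` sends each `a_i` to a
non-zero-divisor generating `χ(L_i)·B`, then there is a unique `A`-algebra morphism
`A[{M_i/a_i}] → B`, and it sends the class of `l/a^ν` to the unique `b` with
`χ(a^ν)·b = χ(l)`. -/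
theorem stmt11 {B : Type*} [CommRing B] [Algebra A B] (M : I → Ideal A) (a : I → A)
    (h1 : ∀ i, algebraMap A B (a i) ∈ nonZeroDivisors B)
    (h2 : ∀ i, Ideal.map (algebraMap A B) (M i + Ideal.span {a i})
        = Ideal.span {algebraMap A B (a i)}) :
    ∃ ψ : ↥(dilatation M a) →ₐ[A] B,
      (∀ ψ' : ↥(dilatation M a) →ₐ[A] B, ψ' = ψ) ∧
      ∀ (x : ↥(dilatation M a)) (ν : I →₀ ℕ) (l : A), l ∈ Lpow M a ν →
        (x : Localization (dilSubmonoid a)) = Localization.mk l ⟨apow a ν, apow_mem a ν⟩ →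
        algebraMap A B (apow a ν) * ψ x = algebraMap A B l := by
  have hS := dilSubmonoid_le_comap_nonZeroDivisors h1
  obtain ⟨ψ⟩ := nonempty_algHom_adjoin_of_dvd hS (⋃ i, dilFrac a i '' (M i)) fun x hx => by
    obtain ⟨i, m, hm, rfl⟩ := Set.mem_iUnion.1 hx
    have hdvd : algebraMap A B m ∈ Ideal.span {algebraMap A B (a i)} :=
      h2 i ▸ Ideal.mem_map_of_mem _ (Submodule.mem_sup_left hm)
    obtain ⟨b, hb⟩ := Ideal.mem_span_singleton'.1 hdvd
    exact ⟨m, ⟨a i, a_mem_dilSubmonoid a i⟩, b, rfl, by rw [mul_comm, hb]⟩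
  exact ⟨ψ, fun ψ' => algHom_ext_of_le_nonZeroDivisors hS ψ' ψ,
    fun x ν l _ hx => algebraMap_mul_algHom_eq_of_eq_mk ψ hx⟩
end
end

section
/- For a finite index set I = {1,...,k}, there is a unique A-algebra isomorphism A[{M_i/a_i}_{i∈I}] ≅ A[N/(a_1⋯a_k)] where N is the ideal Σ_{i∈I} M_i·∏_{j≠i}(a_j), i.e. a multi-centered dilatation over a finite index set is a mono-centered dilatation. -/
open scoped TensorProduct

noncomputable section

variable {A : Type*} [CommRing A] {I : Type*}

/-!
Each `a_i` divides `b = a_1 ⋯ a_k` and `b` lies in the monoid generated by the `a_i`, so inverting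
all `a_i` is the same as inverting `b` alone, and under this identification
`m / a_i = m ∏_{j ≠ i} a_j / b`. The two dilatations are therefore the same subalgebra of one
localization, the ideal `Σ_i M_i ∏_{j ≠ i} a_j` being generated by the numerators on the right.
Uniqueness: `a_i • (m / a_i) = m`, so an `A`-algebra map out of `A[{M_i/a_i}]` is determined on
the generators as soon as each `a_i` is a non-zero-divisor in the target; in `A[N/b]` it is,
because it becomes a unit in the ambient localization.
-/

variable {M : I → Ideal A} {a : I → A}

theorem Ideal.span_iUnion_image_mul {ι : Type*} [Fintype ι] (M : ι → Ideal A) (c : ι → A) :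
    Ideal.span (⋃ i, (· * c i) '' (M i : Set A)) = ∑ i, M i * Ideal.span {c i} := by
  simp only [Ideal.span_iUnion, ← Set.mul_singleton, ← Ideal.span_mul_span', Ideal.span_eq,
    Ideal.sum_eq_sup, Finset.sup_univ_eq_iSup]

theorem smul_dilFrac_one (i : I) (m : A) : m • dilFrac a i 1 = dilFrac a i m := by
  rw [dilFrac, Localization.smul_mk, smul_eq_mul, mul_one, dilFrac]

theorem dilatation_eq_adjoin_of_span_eq (S : I → Set A) (hS : ∀ i, Ideal.span (S i) = M i) :
    dilatation M a = Algebra.adjoin A (⋃ i, dilFrac a i '' S i) := by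
  refine le_antisymm (Algebra.adjoin_le ?_) (Algebra.adjoin_mono ?_)
  · rintro _ ⟨_, ⟨i, rfl⟩, m, hm, rfl⟩
    have hspan : Ideal.span (S i) ≤ (Subalgebra.toSubmodule (Algebra.adjoin A
        (⋃ i, dilFrac a i '' S i))).comap (LinearMap.toSpanSingleton A _ (dilFrac a i 1)) :=
      Submodule.span_le.2 fun s hs => by
        rw [SetLike.mem_coe, Submodule.mem_comap, LinearMap.toSpanSingleton_apply, smul_dilFrac_one]
        exact Algebra.subset_adjoin (Set.mem_iUnion.2 ⟨i, Set.mem_image_of_mem _ hs⟩)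
    simpa only [Submodule.mem_comap, LinearMap.toSpanSingleton_apply, smul_dilFrac_one,
      Subalgebra.mem_toSubmodule, SetLike.mem_coe] using hspan ((hS i).ge hm)
  · exact Set.iUnion_mono fun i => Set.image_mono ((hS i) ▸ Ideal.subset_span)

theorem smul_dilFrac (i : I) (m : A) : a i • dilFrac a i m = algebraMap A _ m := by
  rw [dilFrac, Localization.mk_eq_mk'_apply, Algebra.smul_def]
  exact IsLocalization.mk'_spec' _ m ⟨a i, a_mem_dilSubmonoid a i⟩

theorem dilatation_algHom_ext {B : Type*} [Semiring B] [Algebra A B]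
    (ha : ∀ i, IsSMulRegular B (a i)) (f g : dilatation M a →ₐ[A] B) : f = g := by
  have hfrac (i : I) (m : A) (x : dilatation M a) (hx : a i • x = algebraMap A _ m) :
      f x = g x :=
    ha i <| show a i • f x = a i • g x by rw [← map_smul, ← map_smul, hx, f.commutes, g.commutes]
  refine AlgHom.ext_of_eq_adjoin rfl fun x hx => ?_
  obtain ⟨i, m, -, rfl⟩ := Set.mem_iUnion.1 hx
  exact hfrac i m _ (Subtype.ext (smul_dilFrac i m))

section SingleCenter

variable {b : A} {c : I → A}

theorem dilSubmonoid_const_le (hb : b ∈ dilSubmonoid a) :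
    dilSubmonoid (fun _ : Unit => b) ≤ dilSubmonoid a :=
  Submonoid.closure_le.2 (Set.range_subset_iff.2 fun _ => hb)

theorem exists_mul_mem_dilSubmonoid_const (hc : ∀ i, a i * c i = b) {x : A}
    (hx : x ∈ dilSubmonoid a) : ∃ m : A, m * x ∈ dilSubmonoid (fun _ : Unit => b) := by
  induction hx using Submonoid.closure_induction with
  | mem x hx =>
      obtain ⟨i, rfl⟩ := hx
      exact ⟨c i, by rw [mul_comm, hc]; exact a_mem_dilSubmonoid _ ()⟩
  | one => exact ⟨1, by simp only [mul_one]; exact Submonoid.one_mem _⟩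
  | mul x y _ _ ihx ihy =>
      obtain ⟨mx, hmx⟩ := ihx
      obtain ⟨my, hmy⟩ := ihy
      exact ⟨mx * my, by rw [mul_mul_mul_comm]; exact Submonoid.mul_mem _ hmx hmy⟩

theorem isLocalization_dilSubmonoid_const (hb : b ∈ dilSubmonoid a) (hc : ∀ i, a i * c i = b) :
    IsLocalization (dilSubmonoid a) (Localization (dilSubmonoid fun _ : Unit => b)) :=
  IsLocalization.isLocalization_of_is_exists_mul_mem _ _ _ (dilSubmonoid_const_le hb)
    fun x => exists_mul_mem_dilSubmonoid_const hc x.2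

variable (a) in
def dilLocalizationEquiv (hb : b ∈ dilSubmonoid a) (hc : ∀ i, a i * c i = b) :
    Localization (dilSubmonoid a) ≃ₐ[A] Localization (dilSubmonoid fun _ : Unit => b) :=
  haveI := isLocalization_dilSubmonoid_const hb hc
  Localization.algEquiv (dilSubmonoid a) _

theorem dilLocalizationEquiv_dilFrac (hb : b ∈ dilSubmonoid a) (hc : ∀ i, a i * c i = b)
    (i : I) (m : A) :
    dilLocalizationEquiv a hb hc (dilFrac a i m) = dilFrac (fun _ : Unit => b) () (m * c i) := by
  have := isLocalization_dilSubmonoid_const hb hc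
  rw [dilLocalizationEquiv, dilFrac, Localization.algEquiv_mk, eq_comm,
    IsLocalization.eq_mk'_iff_mul_eq, mul_comm, ← Algebra.smul_def, dilFrac, Localization.smul_mk,
    smul_eq_mul, mul_left_comm, hc, mul_comm m, ← smul_eq_mul, ← Localization.smul_mk]
  exact smul_dilFrac (a := fun _ : Unit => b) () m

theorem map_dilatation_dilLocalizationEquiv [Fintype I] (hb : b ∈ dilSubmonoid a)
    (hc : ∀ i, a i * c i = b) :
    (dilatation M a).map (dilLocalizationEquiv a hb hc : _ →ₐ[A] _) =
      dilatation (fun _ : Unit => ∑ i, M i * Ideal.span {c i}) (fun _ => b) := by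
  rw [dilatation_eq_adjoin_of_span_eq (fun _ => ⋃ i, (· * c i) '' (M i : Set A))
      (fun _ => Ideal.span_iUnion_image_mul M c), dilatation, AlgHom.map_adjoin]
  -- every `i : Unit` is definitionally `()`
  change _ = Algebra.adjoin A (⋃ _ : Unit, dilFrac (fun _ : Unit => b) () '' _)
  simp only [Set.iUnion_const, Set.image_iUnion, Set.image_image, AlgEquiv.coe_toAlgHom,
    dilLocalizationEquiv_dilFrac]

theorem isSMulRegular_dilatation_const (hb : b ∈ dilSubmonoid a) (hc : ∀ i, a i * c i = b)
    (N : Unit → Ideal A) (i : I) : IsSMulRegular (dilatation N fun _ => b) (a i) := by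
  have := isLocalization_dilSubmonoid_const hb hc
  have hunit : IsSMulRegular (Localization (dilSubmonoid fun _ : Unit => b)) (a i) :=
    (isSMulRegular_algebraMap_iff (Localization (dilSubmonoid fun _ : Unit => b))).1 <|
      IsUnit.isSMulRegular _ <|
      IsLocalization.map_units _ (⟨a i, a_mem_dilSubmonoid a i⟩ : dilSubmonoid a)
  exact fun x y hxy => Subtype.ext (hunit (congrArg Subtype.val hxy))

variable (M a) in
def dilatationEquivConst [Fintype I] (hb : b ∈ dilSubmonoid a)
    (hc : ∀ i, a i * c i = b) :
    dilatation M a ≃ₐ[A] dilatation (fun _ : Unit => ∑ i, M i * Ideal.span {c i}) (fun _ => b) :=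
  ((dilLocalizationEquiv a hb hc).subalgebraMap _).trans
    (Subalgebra.equivOfEq _ _ (map_dilatation_dilLocalizationEquiv hb hc))

end SingleCenter

/-- for a finite index set, the multi-centered dilatation is, via a unique
`A`-algebra isomorphism, the mono-centered dilatation with center
`[Σ_i M_i·∏_{j≠i}(a_j), a_1⋯a_k]`. -/
theorem stmt12 [Fintype I] [DecidableEq I] (M : I → Ideal A) (a : I → A) :
    ∃ e : ↥(dilatation M a) ≃ₐ[A]
        ↥(dilatation
            (fun _ : Unit => ∑ i, M i * Ideal.span {∏ j ∈ Finset.univ.erase i, a j})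
            (fun _ : Unit => ∏ i, a i)),
      ∀ e', e' = e := by
  have hb : ∏ i, a i ∈ dilSubmonoid a :=
    Submonoid.prod_mem _ fun i _ => a_mem_dilSubmonoid a i
  have hc (i : I) : a i * ∏ j ∈ Finset.univ.erase i, a j = ∏ j, a j :=
    Finset.mul_prod_erase _ _ (Finset.mem_univ i)
  refine ⟨dilatationEquivConst M a hb hc, fun e' => AlgEquiv.coe_toAlgHom_injective ?_⟩
  exact dilatation_algHom_ext (isSMulRegular_dilatation_const hb hc _) _ _

end
end

section
/- Localizing the dilatation recovers the localization: if S ⊆ A is the multiplicative set generated by {a_i}_{i∈I} and S' the multiplicative set of A[{M_i/a_i}_{i∈I}] consisting of the images of the a^ν, then S'⁻¹(A[{M_i/a_i}_{i∈I}]) ≅ S⁻¹A canonically as A-algebras. -/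
/-!
The dilatation `D` sits between `A` and `S⁻¹A`, and `D → S⁻¹A` is injective. So `S⁻¹A` already
is the localization of `D` at the image of `S`: the images of `S` are units in `S⁻¹A`, every
fraction `c / s` has numerator and denominator coming from `A ⊆ D`, and injectivity makes the
kernel condition trivial.
-/

open scoped TensorProduct

noncomputable section

variable {A : Type*} [CommRing A] {I : Type*}

theorem IsLocalization.of_algebraMap_injective {R B C : Type*} [CommRing R] [CommRing B]
    [CommRing C] [Algebra R B] [Algebra R C] [Algebra B C] [IsScalarTower R B C]
    (M : Submonoid R) [IsLocalization M C] (hBC : Function.Injective (algebraMap B C)) :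
    IsLocalization (M.map (algebraMap R B)) C where
  map_units := by
    rintro ⟨_, m, hm, rfl⟩
    simpa only [← IsScalarTower.algebraMap_apply] using IsLocalization.map_units C ⟨m, hm⟩
  surj z := by
    obtain ⟨⟨r, m⟩, h⟩ := IsLocalization.surj M z
    refine ⟨⟨algebraMap R B r, ⟨algebraMap R B m, m, m.2, rfl⟩⟩, ?_⟩
    simpa only [← IsScalarTower.algebraMap_apply] using h
  exists_of_eq h := ⟨1, by rw [hBC h]⟩

theorem Subalgebra.isLocalization_map_algebraMap {R C : Type*} [CommRing R] [CommRing C]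
    [Algebra R C] (M : Submonoid R) [IsLocalization M C] (D : Subalgebra R C) :
    IsLocalization (M.map (algebraMap R D)) C :=
  IsLocalization.of_algebraMap_injective M Subtype.val_injective

/-- localizing the dilatation at the images of the `a^ν` recovers the
localization `S⁻¹A`, compatibly with the maps from `A`. -/
theorem stmt16 (M : I → Ideal A) (a : I → A) :
    ∃ e : Localization
          (Submonoid.closure (Set.range fun i => algebraMap A ↥(dilatation M a) (a i)))
        ≃+* Localization (dilSubmonoid a),
      ∀ c : A,
        e (algebraMap ↥(dilatation M a)
            (Localization (Submonoid.closure
              (Set.range fun i => algebraMap A ↥(dilatation M a) (a i))))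
            (algebraMap A ↥(dilatation M a) c))
          = algebraMap A (Localization (dilSubmonoid a)) c := by
  set D := dilatation M a
  have hS : Submonoid.closure (Set.range fun i => algebraMap A D (a i)) =
      (dilSubmonoid a).map (algebraMap A D) :=
    (MonoidHom.map_mclosure _ _).trans (congrArg _ (Set.range_comp _ _).symm) |>.symm
  rw [hS]
  have := Subalgebra.isLocalization_map_algebraMap (dilSubmonoid a) D
  let e := IsLocalization.algEquiv ((dilSubmonoid a).map (algebraMap A D))
    (Localization ((dilSubmonoid a).map (algebraMap A D))) (Localization (dilSubmonoid a))
  exact ⟨e.toRingEquiv, fun c => e.commutes (algebraMap A D c)⟩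
end
end
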